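/- Let p be a prime, α ≥ 1 an integer, and w an integer with 0 ≤ w < α(p−1). Then the minimum of #{v ∈ 𝔽_p^{3α} : |v|_M > w and f(v) ≠ 0} over all nonzero reduced polynomials f ∈ 𝔽_p[x_1,…,x_{3α}] of total degree at most 2α(p−1) equals C(α, >w)_p. (This gives the distance d = C(α,>w)_p of the quantum triorthogonal code obtained from the Manhattan-weight puncturing of RM_p(r, 3α) with maximal degree r = α(p−1) − 1.) -/

import Mathlib

/-- The `p`-nomial coefficient `C(m,s)_p`: the coefficient of `x^s` in
`(1 + x + ⋯ + x^{p−1})^m ∈ ℤ[x]`, extended by `0` for `s < 0`. -/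
noncomputable def pnomial (p m : ℕ) (s : ℤ) : ℤ :=
  if 0 ≤ s then
    ((∑ i ∈ Finset.range p, (Polynomial.X : Polynomial ℤ) ^ i) ^ m).coeff s.toNat
  else 0

/-- `C(m,>s)_p = ∑_{i>s} C(m,i)_p`.  Since `C(m,i)_p = 0` for `i > m(p−1)`,
the sum may be truncated at `m(p−1)`. -/
noncomputable def pnomialGT (p m : ℕ) (s : ℤ) : ℤ :=
  ∑ i ∈ Finset.range (m * (p - 1) + 1), if s < (i : ℤ) then pnomial p m i else 0

/-- `Δ_p(m,r,w)`: writing `r = α(p−1)+β` with `0 ≤ β ≤ p−2` (so `α = r/(p−1)`,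
`β = r % (p−1)`), this is `C(m−α,>w)_p` if `β = 0`, and
`C(m−α,>w)_p − ∑_{j=p−β}^{p−1} C(m−α−1,>w−j)_p` otherwise. -/
noncomputable def Δp (p m r : ℕ) (w : ℤ) : ℤ :=
  if r % (p - 1) = 0 then pnomialGT p (m - r / (p - 1)) w
  else pnomialGT p (m - r / (p - 1)) w -
    ∑ j ∈ Finset.Icc (p - r % (p - 1)) (p - 1),
      pnomialGT p (m - r / (p - 1) - 1) (w - (j : ℤ))

/-- The Manhattan weight `|v|_M = ∑ i, val(v_i)` of a vector `v ∈ 𝔽_p^m`. -/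
def manhattanWeight {p m : ℕ} (v : Fin m → ZMod p) : ℕ := ∑ i, (v i).val

/-!
Induct on the number of variables, singling out `x₀`. If `S` is the set of `c` with
`f(c, ·) = 0`, then `f = ∏_{c ∈ S} (x₀ - c) · g`, so each of the `p - |S|` remaining slices
`f(c, ·)` is, up to a nonzero constant, a nonzero reduced polynomial of total degree at most
`deg f - |S|` in one variable fewer. The slice at `x₀ = c` lifts the Manhattan weight by `val c`,
so the induction hypothesis yields double sums `∑_{t < A} ∑_{j < B} C(a, > w - t - j)_p`, which
only grow when the rectangle `A × B` is made more square at fixed perimeter. The bound is attained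
by `∏_{i ≥ α} (1 - x_i^{p-1})`, whose nonzeros are the vectors supported on the first `α`
coordinates.
-/

open Finset

section Counting

variable {p : ℕ} [NeZero p]

theorem card_filter_fin_succ {A : Type*} [Fintype A] {m : ℕ} (Q : (Fin (m + 1) → A) → Prop)
    [DecidablePred Q] :
    #{v | Q v} = ∑ c : A, #{v : Fin m → A | Q (Fin.cons c v)} := by
  simp only [card_filter]
  rw [← (Fin.consEquiv fun _ => A).sum_comp, Fintype.sum_prod_type]
  rfl

omit [NeZero p] in
theorem manhattanWeight_cons {m : ℕ} (c : ZMod p) (v : Fin m → ZMod p) :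
    manhattanWeight (Fin.cons c v : Fin (m + 1) → ZMod p) = c.val + manhattanWeight v := by
  simp [manhattanWeight, Fin.sum_univ_succ]

theorem sum_zmod_val {M : Type*} [AddCommMonoid M] (g : ℕ → M) :
    ∑ c : ZMod p, g c.val = ∑ j ∈ range p, g j := by
  obtain ⟨n, rfl⟩ : ∃ n, p = n + 1 := Nat.exists_eq_succ_of_ne_zero (NeZero.ne p)
  exact Fin.sum_univ_eq_sum_range g _

open Polynomial in
theorem sum_X_pow_manhattanWeight (m : ℕ) :
    ∑ v : Fin m → ZMod p, (X : ℤ[X]) ^ manhattanWeight v = (∑ i ∈ range p, X ^ i) ^ m := by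
  rw [← sum_zmod_val, ← Fin.prod_const, Finset.prod_univ_sum]
  simp [manhattanWeight, Finset.prod_pow_eq_pow_sum]

theorem card_manhattanWeight_eq (m s : ℕ) :
    (#{v : Fin m → ZMod p | manhattanWeight v = s} : ℤ) = pnomial p m s := by
  rw [pnomial, if_pos (Int.natCast_nonneg s), Int.toNat_natCast, ← sum_X_pow_manhattanWeight,
    Polynomial.finsetSum_coeff]
  simp [Polynomial.coeff_X_pow, eq_comm]

theorem manhattanWeight_le {m : ℕ} (v : Fin m → ZMod p) : manhattanWeight v ≤ m * (p - 1) := by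
  calc manhattanWeight v ≤ ∑ _i : Fin m, (p - 1) :=
        sum_le_sum fun i _ => Nat.le_sub_one_of_lt (ZMod.val_lt (v i))
    _ = m * (p - 1) := by simp

theorem card_manhattanWeight_gt (m : ℕ) (w : ℤ) :
    (#{v : Fin m → ZMod p | w < manhattanWeight v} : ℤ) = pnomialGT p m w := by
  rw [card_eq_sum_card_fiberwise (f := manhattanWeight) (t := range (m * (p - 1) + 1))
    fun v _ => mem_range.2 (Nat.lt_succ_of_le (manhattanWeight_le v))]
  push_cast
  refine sum_congr rfl fun i _ => ?_
  rw [filter_filter]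
  split_ifs with hi
  · rw [← card_manhattanWeight_eq]
    congr 2
    ext v
    simp only [mem_filter, mem_univ, true_and, and_iff_right_iff_imp]
    rintro rfl
    exact hi
  · rw [Nat.cast_eq_zero, card_eq_zero, filter_eq_empty_iff]
    rintro v - ⟨hv, rfl⟩
    exact hi hv

theorem pnomialGT_succ (m : ℕ) (w : ℤ) :
    pnomialGT p (m + 1) w = ∑ j ∈ range p, pnomialGT p m (w - j) := by
  simp_rw [← card_manhattanWeight_gt, card_filter_fin_succ, manhattanWeight_cons]
  push_cast
  rw [← sum_zmod_val fun j : ℕ => (#{v : Fin m → ZMod p | w - j < manhattanWeight v} : ℤ)]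
  refine sum_congr rfl fun c _ => ?_
  simp_rw [sub_lt_iff_lt_add']

theorem pnomialGT_nonneg (m : ℕ) (w : ℤ) : 0 ≤ pnomialGT p m w := by
  rw [← card_manhattanWeight_gt (p := p)]
  positivity

theorem pnomialGT_antitone (m : ℕ) : Antitone (pnomialGT p m) := by
  intro w w' h
  simp only [← card_manhattanWeight_gt (p := p), Nat.cast_le]
  exact card_le_card (monotone_filter_right _ fun v _ => h.trans_lt)

end Counting

section BoxSum

variable {M : Type*} [AddCommMonoid M]

def boxSum (g : ℕ → M) (A B : ℕ) : M := ∑ t ∈ range A, ∑ j ∈ range B, g (t + j)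

theorem boxSum_comm (g : ℕ → M) (A B : ℕ) : boxSum g A B = boxSum g B A := by
  rw [boxSum, boxSum, sum_comm]
  simp_rw [add_comm]

theorem boxSum_one_right (g : ℕ → M) (A : ℕ) : boxSum g A 1 = ∑ t ∈ range A, g t := by
  simp [boxSum]

variable [PartialOrder M] [IsOrderedAddMonoid M] {g : ℕ → M}

theorem sum_range_card_le_sum_of_monotone {H : ℕ → M} (hH : Monotone H) (V : Finset ℕ) :
    ∑ t ∈ range #V, H t ≤ ∑ t ∈ V, H t := by
  induction V using Finset.induction_on_max with
  | empty => simp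
  | insert a s hlt ih =>
    have ha : a ∉ s := fun h => lt_irrefl a (hlt a h)
    have hcard : #s ≤ a := by
      simpa using card_le_card fun x hx => mem_range.2 (hlt x hx)
    rw [card_insert_of_notMem ha, sum_range_succ, sum_insert ha, add_comm (H a)]
    exact add_le_add ih (hH hcard)

theorem boxSum_mono_left (hg : 0 ≤ g) {A A' : ℕ} (h : A ≤ A') (B : ℕ) :
    boxSum g A B ≤ boxSum g A' B :=
  sum_le_sum_of_subset_of_nonneg (range_subset_range.2 h) fun _ _ _ =>
    sum_nonneg fun _ _ => hg _

theorem boxSum_succ_left_le (hg : 0 ≤ g) {a b : ℕ} (h : b ≤ a) :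
    boxSum g (a + 1) b ≤ boxSum g a (b + 1) := by
  have hrow : boxSum g (a + 1) b = boxSum g a b + ∑ j ∈ range b, g (a + j) :=
    sum_range_succ _ _
  have hcol : boxSum g a (b + 1) = boxSum g a b + ∑ t ∈ range a, g (t + b) := by
    simp only [boxSum, sum_range_succ, sum_add_distrib]
  rw [hrow, hcol]
  gcongr
  calc ∑ j ∈ range b, g (a + j) = ∑ t ∈ Ico (a - b) a, g (t + b) := by
        rw [sum_Ico_eq_sum_range, Nat.sub_sub_self h]
        exact sum_congr rfl fun j _ => congrArg g (by omega)
    _ ≤ ∑ t ∈ range a, g (t + b) :=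
        sum_le_sum_of_subset_of_nonneg (fun t ht => by simp at ht ⊢; omega) fun _ _ _ => hg _

theorem boxSum_add_left_le (hg : 0 ≤ g) {A B d : ℕ} (h : B + d ≤ A) :
    boxSum g (A + d) B ≤ boxSum g A (B + d) := by
  induction d generalizing B with
  | zero => rfl
  | succ d ih =>
    calc boxSum g (A + d + 1) B ≤ boxSum g (A + d) (B + 1) := boxSum_succ_left_le hg (by omega)
      _ ≤ boxSum g A (B + 1 + d) := ih (by omega)
      _ = boxSum g A (B + (d + 1)) := by rw [add_assoc, add_comm 1 d]

theorem boxSum_le_boxSum_of_min_le (hg : 0 ≤ g) {A B A' B' : ℕ} (hsum : A + B = A' + B')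
    (hmin : min A' B' ≤ min A B) : boxSum g A' B' ≤ boxSum g A B := by
  wlog h' : B' ≤ A' generalizing A' B'
  · rw [boxSum_comm g A' B']
    exact this (by omega) (by omega) (by omega)
  wlog h : B ≤ A generalizing A B
  · rw [boxSum_comm g A B]
    exact this (by omega) (by omega) (by omega)
  obtain ⟨d, rfl⟩ : ∃ d, A' = A + d := ⟨A' - A, by omega⟩
  obtain rfl : B = B' + d := by omega
  exact boxSum_add_left_le hg (by omega)

end BoxSum

section BoxSumPnomial

variable {p : ℕ} [NeZero p]

theorem boxSum_pnomialGT_right_eq (a A : ℕ) (w : ℤ) :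
    boxSum (fun s : ℕ => pnomialGT p a (w - s)) A p =
      ∑ t ∈ range A, pnomialGT p (a + 1) (w - t) := by
  refine sum_congr rfl fun t _ => ?_
  rw [pnomialGT_succ]
  refine sum_congr rfl fun j _ => ?_
  push_cast
  ring_nf

theorem sum_pnomialGT_le_of_forall_boxSum_le {a e e₁ m D : ℕ} {w N : ℤ} (he : e ≤ p - 1)
    (he₁ : e₁ ≤ p - 1) (hD : D + e₁ + (a + 1) * (p - 1) ≤ (m + 1) * (p - 1) + e)
    (hDm : D ≤ m * (p - 1))
    (hN : ∀ a' e', e' ≤ p - 1 → D + (a' + 1) * (p - 1) ≤ m * (p - 1) + e' →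
      boxSum (fun s : ℕ => pnomialGT p a' (w - s)) (p - e₁) (p - e') ≤ N) :
    ∑ j ∈ range (p - e), pnomialGT p a (w - j) ≤ N := by
  have hp : 0 < p := Nat.pos_of_neZero p
  have hg : ∀ a', 0 ≤ fun s : ℕ => pnomialGT p a' (w - s) := fun a' s => pnomialGT_nonneg a' _
  have hm : (m + 1) * (p - 1) = m * (p - 1) + (p - 1) := by ring
  rcases le_or_gt e e₁ with hee | hee
  · refine le_trans ?_ (hN a (p - 1 - e₁ + e) (by omega) (by omega))
    rw [← boxSum_one_right]
    exact boxSum_le_boxSum_of_min_le (hg a) (by omega) (by omega)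
  · cases a with
    | zero =>
      refine le_trans ?_ (hN 0 (p - 1) le_rfl (by omega))
      rw [← boxSum_one_right, Nat.sub_sub_self hp]
      exact boxSum_mono_left (hg 0) (by omega) 1
    | succ b =>
      have hb : (b + 1 + 1) * (p - 1) = (b + 1) * (p - 1) + (p - 1) := by ring
      refine le_trans ?_ (hN b (e - e₁) (by omega) (by omega))
      rw [← boxSum_pnomialGT_right_eq]
      exact boxSum_le_boxSum_of_min_le (hg b) (by omega) (by omega)

end BoxSumPnomial

namespace MvPolynomial

section EvalFirst

variable {R σ : Type*} [CommSemiring R] {m : ℕ}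

theorem degreeOf_eval_C_le (P : Polynomial (MvPolynomial σ R)) (c : R) (i : σ) :
    degreeOf i (P.eval (C c)) ≤ P.support.sup fun k => degreeOf i (P.coeff k) := by
  rw [Polynomial.eval_eq_sum, Polynomial.sum_def]
  refine (degreeOf_sum_le _ _ _).trans (sup_mono_fun fun k _ => ?_)
  rw [← C_pow, mul_comm]
  exact degreeOf_C_mul_le _ _ _

theorem totalDegree_eval_C_le (P : Polynomial (MvPolynomial σ R)) (c : R) :
    totalDegree (P.eval (C c)) ≤ P.support.sup fun k => totalDegree (P.coeff k) := by
  rw [Polynomial.eval_eq_sum, Polynomial.sum_def]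
  refine (totalDegree_finsetSum _ _).trans (sup_mono_fun fun k _ => ?_)
  rw [← C_pow, mul_comm, C_mul']
  exact totalDegree_smul_le _ _

theorem totalDegree_le_of_forall_degreeOf_le [Fintype σ] {f : MvPolynomial σ R} {d : ℕ}
    (h : ∀ i, f.degreeOf i ≤ d) :
    f.totalDegree ≤ Fintype.card σ * d := by
  refine Finset.sup_le fun μ hμ => ?_
  rw [Finsupp.sum_fintype _ _ fun _ => rfl]
  calc ∑ i, μ i ≤ ∑ _i : σ, d := sum_le_sum fun i _ => degreeOf_le_iff.1 (h i) μ hμ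
    _ = Fintype.card σ * d := by simp

noncomputable def evalFirst (c : R) (f : MvPolynomial (Fin (m + 1)) R) : MvPolynomial (Fin m) R :=
  (finSuccEquiv R m f).eval (C c)

theorem eval_evalFirst (c : R) (f : MvPolynomial (Fin (m + 1)) R) (v : Fin m → R) :
    eval v (evalFirst c f) = eval (Fin.cons c v) f := by
  rw [evalFirst, eval_eq_eval_mv_eval', ← Polynomial.eval₂_at_apply, Polynomial.eval_map]
  simp

theorem degreeOf_evalFirst_le (c : R) (f : MvPolynomial (Fin (m + 1)) R) (i : Fin m) :
    degreeOf i (evalFirst c f) ≤ degreeOf i.succ f :=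
  (degreeOf_eval_C_le _ c i).trans (Finset.sup_le fun k _ => degreeOf_coeff_finSuccEquiv f i k)

theorem totalDegree_evalFirst_le (c : R) (f : MvPolynomial (Fin (m + 1)) R) :
    totalDegree (evalFirst c f) ≤ totalDegree f :=
  (totalDegree_eval_C_le _ c).trans <| Finset.sup_le fun k hk =>
    (Nat.le_add_right _ k).trans
      (totalDegree_coeff_finSuccEquiv_add_le f k (Polynomial.mem_support_iff.1 hk))

end EvalFirst

section Factor

variable {R : Type*} [CommRing R] [IsDomain R] {m : ℕ}

theorem prod_X_sub_C_dvd_finSuccEquiv {f : MvPolynomial (Fin (m + 1)) R} (hf : f ≠ 0)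
    {S : Finset R} (hS : ∀ c ∈ S, evalFirst c f = 0) :
    ∏ c ∈ S, (Polynomial.X - Polynomial.C (C c)) ∣ finSuccEquiv R m f := by
  have hF : finSuccEquiv R m f ≠ 0 := by simpa using hf
  have hmap : S.val.map (fun c => Polynomial.X - Polynomial.C (C c)) =
      (S.val.map (C : R →+* MvPolynomial (Fin m) R)).map
        fun a => Polynomial.X - Polynomial.C a := by
    rw [Multiset.map_map]
    rfl
  rw [prod_eq_multiset_prod, hmap, Multiset.prod_X_sub_C_dvd_iff_le_roots hF,
    Multiset.le_iff_subset (S.nodup.map (C_injective (Fin m) R))]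
  intro a ha
  obtain ⟨c, hc, rfl⟩ := Multiset.mem_map.1 ha
  exact (Polynomial.mem_roots hF).2 (hS c hc)

theorem natDegree_prod_X_sub_C_C (S : Finset R) :
    (∏ c ∈ S, (Polynomial.X - Polynomial.C (C c : MvPolynomial (Fin m) R))).natDegree = #S := by
  rw [Polynomial.natDegree_prod_of_monic _ _ fun c _ => Polynomial.monic_X_sub_C _]
  simp

theorem card_le_degreeOf_zero {f : MvPolynomial (Fin (m + 1)) R} (hf : f ≠ 0)
    {S : Finset R} (hS : ∀ c ∈ S, evalFirst c f = 0) : #S ≤ degreeOf 0 f := by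
  rw [← natDegree_finSuccEquiv, ← natDegree_prod_X_sub_C_C (m := m)]
  exact Polynomial.natDegree_le_of_dvd (prod_X_sub_C_dvd_finSuccEquiv hf hS) (by simpa using hf)

theorem exists_totalDegree_add_card_le {f : MvPolynomial (Fin (m + 1)) R} (hf : f ≠ 0)
    {S : Finset R} (hS : ∀ c ∈ S, evalFirst c f = 0) :
    ∃ g : MvPolynomial (Fin (m + 1)) R, g.totalDegree + #S ≤ f.totalDegree ∧
      ∀ c, evalFirst c f = C (∏ c' ∈ S, (c - c')) * evalFirst c g := by
  obtain ⟨G, hFG⟩ := prod_X_sub_C_dvd_finSuccEquiv hf hS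
  set Q := ∏ c ∈ S, (Polynomial.X - Polynomial.C (C c : MvPolynomial (Fin m) R))
  have hf' : f = (finSuccEquiv R m).symm Q * (finSuccEquiv R m).symm G := by
    rw [← map_mul, ← hFG, AlgEquiv.symm_apply_apply]
  refine ⟨(finSuccEquiv R m).symm G, ?_, fun c => ?_⟩
  · have hQ : (finSuccEquiv R m).symm Q ≠ 0 := by rintro h; simp [h] at hf'; exact hf hf'
    have hG : (finSuccEquiv R m).symm G ≠ 0 := by rintro h; simp [h] at hf'; exact hf hf'
    have hdeg : #S ≤ ((finSuccEquiv R m).symm Q).totalDegree := by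
      calc #S = Q.natDegree := (natDegree_prod_X_sub_C_C S).symm
        _ = degreeOf 0 ((finSuccEquiv R m).symm Q) := by
          rw [← natDegree_finSuccEquiv, AlgEquiv.apply_symm_apply]
        _ ≤ _ := degreeOf_le_totalDegree _ 0
    rw [hf', totalDegree_mul_of_isDomain hQ hG]
    omega
  · simp [evalFirst, hFG, Q, Polynomial.eval_prod]

end Factor

end MvPolynomial

section Footprint

open MvPolynomial

variable {p : ℕ} [Fact p.Prime] {m : ℕ}

noncomputable def nonzerosAbove (w : ℤ) (f : MvPolynomial (Fin m) (ZMod p)) :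
    Finset (Fin m → ZMod p) :=
  {v | w < manhattanWeight v ∧ eval v f ≠ 0}

theorem nonzerosAbove_C_mul {u : ZMod p} (hu : u ≠ 0) (w : ℤ)
    (f : MvPolynomial (Fin m) (ZMod p)) :
    nonzerosAbove w (C u * f) = nonzerosAbove w f := by
  simp [nonzerosAbove, hu]

theorem card_nonzerosAbove_succ (w : ℤ) (f : MvPolynomial (Fin (m + 1)) (ZMod p)) :
    (#(nonzerosAbove w f) : ℤ) =
      ∑ c : ZMod p, (#(nonzerosAbove (w - c.val) (evalFirst c f)) : ℤ) := by
  rw [nonzerosAbove, card_filter_fin_succ]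
  push_cast
  simp_rw [nonzerosAbove, manhattanWeight_cons, eval_evalFirst, Nat.cast_add, sub_lt_iff_lt_add']

theorem boxSum_le_card_nonzerosAbove {g : ℕ → ℤ} (hg : Monotone g) {B : ℕ} {w : ℤ}
    (f : MvPolynomial (Fin (m + 1)) (ZMod p)) (T : Finset (ZMod p))
    (hT : ∀ c ∈ T,
      ∑ j ∈ range B, g (c.val + j) ≤ #(nonzerosAbove (w - c.val) (evalFirst c f))) :
    boxSum g #T B ≤ #(nonzerosAbove w f) := by
  have hrow : Monotone fun t => ∑ j ∈ range B, g (t + j) :=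
    fun t t' h => sum_le_sum fun j _ => hg (by omega)
  calc boxSum g #T B ≤ ∑ t ∈ T.image ZMod.val, ∑ j ∈ range B, g (t + j) := by
        rw [← card_image_of_injective T (ZMod.val_injective p)]
        exact sum_range_card_le_sum_of_monotone hrow _
    _ = ∑ c ∈ T, ∑ j ∈ range B, g (c.val + j) :=
        sum_image fun x _ y _ h => ZMod.val_injective p h
    _ ≤ ∑ c ∈ T, (#(nonzerosAbove (w - c.val) (evalFirst c f)) : ℤ) := sum_le_sum hT
    _ ≤ ∑ c : ZMod p, (#(nonzerosAbove (w - c.val) (evalFirst c f)) : ℤ) :=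
        sum_le_sum_of_subset_of_nonneg (subset_univ T) fun _ _ _ => Nat.cast_nonneg _
    _ = #(nonzerosAbove w f) := (card_nonzerosAbove_succ w f).symm

theorem exists_slices_of_reduced {f : MvPolynomial (Fin (m + 1)) (ZMod p)}
    (hf : f ≠ 0) (hred : ∀ i, f.degreeOf i ≤ p - 1) :
    ∃ S : Finset (ZMod p), #S ≤ f.degreeOf 0 ∧
      ∃ g : ZMod p → MvPolynomial (Fin m) (ZMod p), ∀ c ∉ S, g c ≠ 0 ∧
        (∀ i, (g c).degreeOf i ≤ p - 1) ∧ (g c).totalDegree + #S ≤ f.totalDegree ∧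
        ∀ w, nonzerosAbove w (g c) = nonzerosAbove w (evalFirst c f) := by
  classical
  set S : Finset (ZMod p) := {c | evalFirst c f = 0}
  have hS : ∀ c ∈ S, evalFirst c f = 0 := fun c hc => (mem_filter.1 hc).2
  obtain ⟨g, hg, hfg⟩ := exists_totalDegree_add_card_le hf hS
  refine ⟨S, card_le_degreeOf_zero hf hS, fun c => evalFirst c g, fun c hc => ?_⟩
  beta_reduce
  have hu : ∏ c' ∈ S, (c - c') ≠ 0 :=
    prod_ne_zero_iff.2 fun c' hc' => sub_ne_zero.2 fun h => hc (h ▸ hc')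
  have hfc : evalFirst c f ≠ 0 := fun h => hc (mem_filter.2 ⟨mem_univ c, h⟩)
  have hgc : evalFirst c g = C (∏ c' ∈ S, (c - c'))⁻¹ * evalFirst c f := by
    rw [hfg c, ← mul_assoc, ← C_mul, inv_mul_cancel₀ hu, C_1, one_mul]
  refine ⟨fun h => hfc (by rw [hfg c, h, mul_zero]), fun i => ?_, ?_, fun w => ?_⟩
  · rw [hgc]
    exact (degreeOf_C_mul_le _ _ _).trans ((degreeOf_evalFirst_le c f i).trans (hred _))
  · exact (Nat.add_le_add_right (totalDegree_evalFirst_le c g) _).trans hg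
  · rw [hfg c, nonzerosAbove_C_mul hu]

/- Sharp for `f = ∏_{c ≥ p - e} (x₀ - c) · ∏_{i > a} (1 - x_i^{p-1})`: `x₀` ranges over `p - e`
values, `x₁, …, x_a` are free and all other coordinates vanish. -/
theorem sum_pnomialGT_le_card_nonzerosAbove {f : MvPolynomial (Fin m) (ZMod p)}
    (hf : f ≠ 0) (hred : ∀ i, f.degreeOf i ≤ p - 1) {a e : ℕ} (he : e ≤ p - 1)
    (hdeg : f.totalDegree + (a + 1) * (p - 1) ≤ m * (p - 1) + e) (w : ℤ) :
    ∑ j ∈ range (p - e), pnomialGT p a (w - j) ≤ #(nonzerosAbove w f) := by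
  have hp : 2 ≤ p := (Fact.out : p.Prime).two_le
  induction m generalizing a e w with
  | zero =>
    obtain rfl : a = 0 := by
      by_contra ha
      have := Nat.mul_le_mul_right (p - 1) (show 2 ≤ a + 1 by omega)
      omega
    obtain rfl : e = p - 1 := by omega
    have hf0 : f.coeff 0 ≠ 0 := fun h => hf (by rw [eq_C_of_isEmpty f, h, C_0])
    rw [Nat.sub_sub_self (by omega), sum_range_one, Nat.cast_zero, sub_zero,
      ← card_manhattanWeight_gt]
    refine Nat.cast_le.2 (card_le_card (monotone_filter_right _ fun v _ hv => ⟨hv, ?_⟩))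
    rwa [eq_C_of_isEmpty f, eval_C]
  | succ m ih =>
    obtain ⟨S, hS, g, hg⟩ := exists_slices_of_reduced hf hred
    have hSf := hS.trans (degreeOf_le_totalDegree f 0)
    have hgdeg : ∀ c ∉ S, (g c).totalDegree ≤ min (f.totalDegree - #S) (m * (p - 1)) :=
      fun c hc => le_min (by have := (hg c hc).2.2.1; omega)
        (by simpa using totalDegree_le_of_forall_degreeOf_le (hg c hc).2.1)
    refine sum_pnomialGT_le_of_forall_boxSum_le (D := min (f.totalDegree - #S) (m * (p - 1))) he
      (hS.trans (hred 0)) (by omega) (min_le_right _ _) fun a' e' he' hdeg' => ?_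
    have hcard : p - #S = #Sᶜ := by rw [card_compl, ZMod.card]
    rw [hcard]
    refine boxSum_le_card_nonzerosAbove
      (fun s s' h => pnomialGT_antitone a' (by omega)) f Sᶜ fun c hc => ?_
    obtain ⟨hne, hredc, -, heq⟩ := hg c (mem_compl.1 hc)
    rw [← heq]
    convert ih hne hredc he' ((Nat.add_le_add_right (hgdeg c (mem_compl.1 hc)) _).trans hdeg')
      (w - c.val) using 3 with j
    push_cast
    ring

end Footprint

section ZeroIndicator

open MvPolynomial

variable {p : ℕ} [Fact p.Prime] {σ : Type*}

noncomputable def zeroIndicator (s : Finset σ) : MvPolynomial σ (ZMod p) :=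
  ∏ i ∈ s, (1 - X i ^ (p - 1))

theorem eval_zeroIndicator_ne_zero_iff (s : Finset σ) (v : σ → ZMod p) :
    eval v (zeroIndicator s) ≠ 0 ↔ ∀ i ∈ s, v i = 0 := by
  have hp : p - 1 ≠ 0 := by have := (Fact.out : p.Prime).two_le; omega
  simp only [zeroIndicator, map_prod, map_sub, map_one, map_pow, eval_X, prod_ne_zero_iff]
  refine forall₂_congr fun i _ => ?_
  by_cases hv : v i = 0
  · simp [hv, hp]
  · simp [hv, ZMod.pow_card_sub_one_eq_one hv]

theorem zeroIndicator_ne_zero (s : Finset σ) : (zeroIndicator s : MvPolynomial σ (ZMod p)) ≠ 0 :=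
  fun h => (eval_zeroIndicator_ne_zero_iff s 0).2 (fun _ _ => rfl) (by rw [h, map_zero])

theorem degreeOf_zeroIndicator_le (s : Finset σ) (j : σ) :
    (zeroIndicator s : MvPolynomial σ (ZMod p)).degreeOf j ≤ p - 1 := by
  classical
  have hfactor : ∀ i, (1 - X i ^ (p - 1) : MvPolynomial σ (ZMod p)).degreeOf j ≤
      if i = j then p - 1 else 0 := by
    intro i
    refine (degreeOf_sub_le _ _ _).trans (max_le (by rw [← C_1, degreeOf_C]; omega) ?_)
    split_ifs with hij
    · simp [hij]
    · rw [degreeOf_X_pow_of_ne _ (Ne.symm hij)]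
  calc (zeroIndicator s : MvPolynomial σ (ZMod p)).degreeOf j
      ≤ ∑ i ∈ s, if i = j then p - 1 else 0 :=
        (degreeOf_prod_le _ _ _).trans (sum_le_sum fun i _ => hfactor i)
    _ ≤ p - 1 := by
        rw [sum_ite_eq']
        split_ifs <;> omega

theorem totalDegree_zeroIndicator_le (s : Finset σ) :
    (zeroIndicator s : MvPolynomial σ (ZMod p)).totalDegree ≤ #s * (p - 1) := by
  calc (zeroIndicator s : MvPolynomial σ (ZMod p)).totalDegree
      ≤ ∑ i ∈ s, (1 - X i ^ (p - 1) : MvPolynomial σ (ZMod p)).totalDegree :=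
        totalDegree_finsetProd _ _
    _ ≤ ∑ _i ∈ s, (p - 1) := sum_le_sum fun i _ =>
        (totalDegree_sub _ _).trans (max_le (by simp) (by rw [totalDegree_X_pow]))
    _ = #s * (p - 1) := by rw [sum_const, smul_eq_mul]

end ZeroIndicator

section ZeroPadding

variable {p : ℕ} [Fact p.Prime] {m n : ℕ}

theorem manhattanWeight_extend_zero (e : Fin n ↪ Fin m) (u : Fin n → ZMod p) :
    manhattanWeight (Function.extend e u 0) = manhattanWeight u := by
  rw [manhattanWeight, ← sum_subset (subset_univ (univ.map e)) fun i _ hi => ?_, sum_map]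
  · simp [manhattanWeight, e.injective.extend_apply]
  · rw [Function.extend_apply' _ _ _ (by simpa using hi)]
    simp

theorem card_nonzerosAbove_zeroIndicator (e : Fin n ↪ Fin m) (w : ℤ) :
    #(nonzerosAbove w (zeroIndicator (univ.map e)ᶜ : MvPolynomial (Fin m) (ZMod p))) =
      #{u : Fin n → ZMod p | w < manhattanWeight u} := by
  have hext : ∀ v : Fin m → ZMod p, (∀ i ∈ (univ.map e)ᶜ, v i = 0) →
      Function.extend e (v ∘ e) 0 = v := by
    intro v hv
    funext i
    by_cases hi : ∃ a, e a = i
    · obtain ⟨a, rfl⟩ := hi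
      exact e.injective.extend_apply _ _ _
    · rw [Function.extend_apply' _ _ _ hi]
      exact (hv i (by simp [hi])).symm
  refine card_nbij' (fun v => v ∘ e) (fun u => Function.extend e u 0) ?_ ?_ ?_ ?_
  · intro v hv
    simp only [nonzerosAbove, coe_filter, Set.mem_ofPred_eq, eval_zeroIndicator_ne_zero_iff,
      mem_univ, true_and] at hv ⊢
    rw [← manhattanWeight_extend_zero e, hext v hv.2]
    exact hv.1
  · intro u hu
    simp only [nonzerosAbove, coe_filter, Set.mem_ofPred_eq, eval_zeroIndicator_ne_zero_iff,
      manhattanWeight_extend_zero, mem_univ, true_and] at hu ⊢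
    refine ⟨hu, fun i hi => Function.extend_apply' _ _ _ (by simpa using hi)⟩
  · intro v hv
    simp only [nonzerosAbove, coe_filter, Set.mem_ofPred_eq, eval_zeroIndicator_ne_zero_iff,
      mem_univ, true_and] at hv
    exact hext v hv.2
  · intro u _
    exact Function.extend_comp e.injective u 0

end ZeroPadding

theorem quantum_code_distance_general (p α : ℕ) [Fact p.Prime] (hα : 1 ≤ α) (w : ℕ) :
    IsLeast {n : ℤ | ∃ f : MvPolynomial (Fin (3 * α)) (ZMod p), f ≠ 0 ∧
        (∀ i, f.degreeOf i ≤ p - 1) ∧ f.totalDegree ≤ 2 * α * (p - 1) ∧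
        n = ((Finset.univ.filter fun v : Fin (3 * α) → ZMod p =>
          (w : ℤ) < (manhattanWeight v : ℤ) ∧ MvPolynomial.eval v f ≠ 0).card : ℤ)}
      (pnomialGT p α (w : ℤ)) := by
  obtain ⟨a, rfl⟩ : ∃ a, α = a + 1 := ⟨α - 1, by omega⟩
  have h3 : 3 * (a + 1) * (p - 1) = 2 * (a + 1) * (p - 1) + (a + 1) * (p - 1) := by ring
  set s := (univ.map (Fin.castLEEmb (by omega : a + 1 ≤ 3 * (a + 1))))ᶜ
  have hs : #s = 2 * (a + 1) := by simp [s, card_compl]; omega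
  refine ⟨⟨zeroIndicator s, zeroIndicator_ne_zero s, degreeOf_zeroIndicator_le s,
    hs ▸ totalDegree_zeroIndicator_le s, ?_⟩, ?_⟩
  · rw [← card_manhattanWeight_gt, ← card_nonzerosAbove_zeroIndicator]
    rfl
  · rintro _ ⟨f, hf, hred, hdeg, rfl⟩
    rw [pnomialGT_succ]
    exact sum_pnomialGT_le_card_nonzerosAbove hf hred (Nat.zero_le _) (by omega) w

/-- For `α ≥ 1` and `0 ≤ w < α(p−1)`, the minimum of
`#{v ∈ 𝔽_p^{3α} : |v|_M > w ∧ f(v) ≠ 0}` over all nonzero reduced polynomials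
`f ∈ 𝔽_p[x_1,…,x_{3α}]` of total degree at most `2α(p−1)` equals `C(α,>w)_p`.
This is the distance of the quantum triorthogonal code obtained from the
Manhattan-weight puncturing of `RM_p(r, 3α)` with maximal degree
`r = α(p−1) − 1`. -/
theorem quantum_code_distance (p α : ℕ) [Fact p.Prime] (hα : 1 ≤ α)
    (w : ℕ) (hw : w < α * (p - 1)) :
    IsLeast {n : ℤ | ∃ f : MvPolynomial (Fin (3 * α)) (ZMod p), f ≠ 0 ∧
        (∀ i, f.degreeOf i ≤ p - 1) ∧ f.totalDegree ≤ 2 * α * (p - 1) ∧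
        n = ((Finset.univ.filter fun v : Fin (3 * α) → ZMod p =>
          (w : ℤ) < (manhattanWeight v : ℤ) ∧ MvPolynomial.eval v f ≠ 0).card : ℤ)}
      (pnomialGT p α (w : ℤ)) :=
  quantum_code_distance_general p α hα w
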